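/- arXiv:2311.15641 — 3 statements merged into one kernel-verified Lean document; each statement's English description precedes it below -/
import Mathlib

section
/- If f : ℝⁿ → ℝⁿ satisfies f(y) + α·y ≥ 0 componentwise for all y ≥ 0, and m ≥ max(α, 0), then for any step size φ > 0 the NSFD iteration y_{k+1} = (y_k + φ·f(y_k) + φ·m·y_k)/(1 + m·φ) maps the nonnegative orthant into itself; consequently, if y_0 ≥ 0 then y_k ≥ 0 for all k. -/
/-! Writing `x + φ • f x + (φ * m) • x = x + φ • (f x + α • x) + (φ * (m - α)) • x` exhibits one
NSFD step as a nonnegative combination of nonnegative vectors, divided by `1 + m * φ > 0`. -/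

section NSFDStep

variable {E : Type*} [AddCommGroup E] [Module ℝ E]

theorem nsfd_numerator_eq (f : E → E) (x : E) (α m φ : ℝ) :
    x + φ • f x + (φ * m) • x = x + φ • (f x + α • x) + (φ * (m - α)) • x := by
  simp only [smul_add, mul_sub, sub_smul, mul_smul]
  abel

variable [PartialOrder E] [IsOrderedAddMonoid E] [PosSMulMono ℝ E]

theorem nsfd_step_nonneg {f : E → E} {x : E} {α m φ : ℝ} (hfx : 0 ≤ f x + α • x)
    (hαm : α ≤ m) (hm : 0 ≤ m) (hφ : 0 ≤ φ) (hx : 0 ≤ x) :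
    0 ≤ (1 + m * φ)⁻¹ • (x + φ • f x + (φ * m) • x) := by
  have hnum : 0 ≤ x + φ • f x + (φ * m) • x := by
    rw [nsfd_numerator_eq f x α m φ]
    have hdrift : 0 ≤ φ • (f x + α • x) := smul_nonneg hφ hfx
    have hshift : 0 ≤ (φ * (m - α)) • x := smul_nonneg (mul_nonneg hφ (sub_nonneg.2 hαm)) hx
    exact add_nonneg (add_nonneg hx hdrift) hshift
  exact smul_nonneg (inv_nonneg.2 (by positivity)) hnum

end NSFDStep

theorem nsfd_positivity (n : ℕ) (f : (Fin n → ℝ) → (Fin n → ℝ)) (α m φ : ℝ)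
    (hf : ∀ y : Fin n → ℝ, 0 ≤ y → 0 ≤ f y + α • y)
    (hm : m ≥ max α 0) (hφ : 0 < φ)
    (y : ℕ → (Fin n → ℝ))
    (hrec : ∀ k, y (k + 1) = (1 + m * φ)⁻¹ • (y k + φ • f (y k) + (φ * m) • y k))
    (h0 : 0 ≤ y 0) :
    ∀ k, 0 ≤ y k := by
  obtain ⟨hαm, hm0⟩ := max_le_iff.1 hm
  intro k
  induction k with
  | zero => exact h0
  | succ k ih => exact hrec k ▸ nsfd_step_nonneg (hf (y k) ih) hαm hm0 hφ.le ih
end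

section
/- Let λ ∈ ℂ be an eigenvalue with Re λ < 0, and suppose m ≥ -|λ|²/(2·Re λ). Then for every φ > 0, the complex number μ = 1 + (φ/(1+mφ))·λ satisfies |μ| < 1. -/
/-! Since `|1 + c λ|² = 1 + c (2 Re λ + c |λ|²)`, for `c > 0` the point `1 + c λ` lies in the
open unit disc exactly when `c |λ|² < -2 Re λ`. With `c = φ / (1 + m φ) < 1 / m`, this follows
from `|λ|² ≤ -2 m Re λ`, which is the hypothesis on `m`. -/

namespace Complex

theorem normSq_one_add_ofReal_mul (c : ℝ) (z : ℂ) :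
    normSq (1 + c * z) = 1 + c * (2 * z.re + c * normSq z) := by
  simp only [normSq_apply, add_re, add_im, one_re, one_im, re_ofReal_mul, im_ofReal_mul]
  ring

theorem norm_one_add_ofReal_mul_lt_one_iff {c : ℝ} (hc : 0 < c) (z : ℂ) :
    ‖1 + c * z‖ < 1 ↔ c * ‖z‖ ^ 2 < -2 * z.re := by
  rw [← sq_lt_one_iff₀ (norm_nonneg _), Complex.sq_norm, normSq_one_add_ofReal_mul,
    Complex.sq_norm, add_lt_iff_neg_left, ← neg_pos, ← mul_neg, mul_pos_iff_of_pos_left hc]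
  constructor <;> intro h <;> linarith

end Complex

theorem div_one_add_mul_lt_inv {m φ : ℝ} (hm : 0 < m) (hφ : 0 < φ) :
    φ / (1 + m * φ) < m⁻¹ := by
  rw [div_lt_iff₀ (by positivity), inv_mul_eq_div, lt_div_iff₀ hm]
  linarith

theorem nsfd_stable_eigenvalue (l : ℂ) (m φ : ℝ)
    (hre : l.re < 0)
    (hm : m ≥ -(‖l‖) ^ 2 / (2 * l.re))
    (hφ : 0 < φ) :
    ‖(1 + ((φ / (1 + m * φ) : ℝ) : ℂ) * l)‖ < 1 := by
  have hnorm_pos : 0 < ‖l‖ := norm_pos_iff.mpr fun h ↦ by simp [h] at hre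
  have hnorm_sq_le : ‖l‖ ^ 2 ≤ m * (-2 * l.re) := by
    rw [ge_iff_le, div_le_iff_of_neg (by linarith)] at hm
    linarith
  have hm_pos : 0 < m :=
    pos_of_mul_pos_left ((by positivity : 0 < ‖l‖ ^ 2).trans_le hnorm_sq_le) (by linarith)
  have hc : 0 < φ / (1 + m * φ) := by positivity
  rw [Complex.norm_one_add_ofReal_mul_lt_one_iff hc]
  calc φ / (1 + m * φ) * ‖l‖ ^ 2 < m⁻¹ * ‖l‖ ^ 2 := by
        gcongr; exact div_one_add_mul_lt_inv hm_pos hφ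
    _ ≤ -2 * l.re := by
        rw [inv_mul_le_iff₀ hm_pos]; exact hnorm_sq_le
end

section
/- Let f : ℝ → ℝ with f(N) = b·e^{-aN}·N - d·N, a > 0, b > d > 0, N* = ln(b/d)/a, and let m ≥ d·ln(b/d)/2. Then for every φ > 0, the derivative at N* of the NSFD map g(N) = N + (φ/(1+mφ))·f(N) satisfies |g'(N*)| < 1. -/
/-!
At the positive equilibrium `N* = log (b / d) / a` one has `b e^{-a N*} = d`, so the growth rate
`f(N) = b e^{-aN} N - d N` has `f'(N*) = b e^{-aN*} (1 - a N*) - d = -d log (b / d) =: λ < 0`.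
The NSFD map has `g'(N*) = 1 + c λ` with `c = φ / (1 + m φ) > 0`, so `g'(N*) < 1`, while
`g'(N*) > -1` means `φ |λ| < 2 (1 + m φ)`, which holds as soon as `2 m ≥ |λ|`.
-/

open Real

noncomputable def rickerGrowth (a b d N : ℝ) : ℝ := b * exp (-a * N) * N - d * N

theorem hasDerivAt_rickerGrowth (a b d N : ℝ) :
    HasDerivAt (rickerGrowth a b d) (b * exp (-a * N) * (1 - a * N) - d) N := by
  have hexp : HasDerivAt (fun x => exp (-a * x)) (exp (-a * N) * -a) N := by
    simpa using ((hasDerivAt_id N).const_mul (-a)).exp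
  exact ((hexp.const_mul b).mul (hasDerivAt_id' N)).sub ((hasDerivAt_id' N).const_mul d)
    |>.congr_deriv (by ring)

theorem exp_neg_mul_log_div_div {a b d : ℝ} (ha : a ≠ 0) (hb : 0 < b) (hd : 0 < d) :
    exp (-a * (log (b / d) / a)) = d / b := by
  rw [neg_mul, mul_div_cancel₀ _ ha, exp_neg, exp_log (div_pos hb hd), inv_div]

theorem hasDerivAt_rickerGrowth_equilibrium {a b d : ℝ} (ha : a ≠ 0) (hb : 0 < b) (hd : 0 < d) :
    HasDerivAt (rickerGrowth a b d) (-d * log (b / d)) (log (b / d) / a) := by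
  convert hasDerivAt_rickerGrowth a b d (log (b / d) / a) using 1
  rw [exp_neg_mul_log_div_div ha hb hd, mul_div_cancel₀ _ ha]
  field_simp
  ring

theorem abs_one_add_div_one_add_mul_mul_lt_one {lam m φ : ℝ} (hlam : lam < 0)
    (hm : -lam / 2 ≤ m) (hφ : 0 < φ) :
    |1 + φ / (1 + m * φ) * lam| < 1 := by
  have hden : 0 < 1 + m * φ := by nlinarith
  have hc : 0 < φ / (1 + m * φ) := div_pos hφ hden
  have hlower : φ / (1 + m * φ) * -lam < 2 := by
    rw [div_mul_eq_mul_div, div_lt_iff₀ hden]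
    nlinarith
  rw [abs_lt]
  constructor <;> nlinarith

theorem nsfd_single_species_stability (a b d m φ : ℝ)
    (ha : 0 < a) (hd : 0 < d) (hbd : d < b)
    (hm : m ≥ d * Real.log (b / d) / 2) (hφ : 0 < φ) :
    |deriv (fun N => N + (φ / (1 + m * φ)) * (b * Real.exp (-a * N) * N - d * N))
        (Real.log (b / d) / a)| < 1 := by
  have hb : 0 < b := hd.trans hbd
  have hlog : 0 < log (b / d) := log_pos ((one_lt_div hd).2 hbd)
  have hf := hasDerivAt_rickerGrowth_equilibrium ha.ne' hb hd
  have hg : HasDerivAt (fun N => N + φ / (1 + m * φ) * (b * exp (-a * N) * N - d * N))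
      (1 + φ / (1 + m * φ) * (-d * log (b / d))) (log (b / d) / a) :=
    (hasDerivAt_id _).add (hf.const_mul _)
  rw [hg.deriv]
  exact abs_one_add_div_one_add_mul_mul_lt_one (by nlinarith) (by linarith) hφ
end
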